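/- arXiv:2301.04808 — 2 statements merged into one kernel-verified Lean document; each statement's English description precedes it below -/
import Mathlib

section
/- Let t be an integer with 1 ≤ t < n/2. For a set S of left vertices with #S = g and a vertex a_i ∈ S, let M_i(S) denote the set of right vertices adjacent to a_i but not adjacent to any other vertex of S. Let E_low be the event that M_i(S) ≠ ∅ for every nonempty set S of left vertices with #S ≤ t and every a_i ∈ S. Then μ(E_low^c) ≤ Σ_{g=1}^{t} g·C(n,g)·e^{−mp(1−p)^{g−1}} ≤ t²·C(n,t)·e^{−mp(1−p)^{t−1}}, where C(n,g) denotes the binomial coefficient. -/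
/-- Weight of a binary matrix under i.i.d. Bernoulli(p) entries: entry `1` has
probability `p`, entry `0` has probability `1 - p`. -/
noncomputable def matWeight (m n : ℕ) (p : ℝ) (X : Matrix (Fin m) (Fin n) (ZMod 2)) : ℝ :=
  ∏ j : Fin m, ∏ i : Fin n, if X j i = 1 then p else 1 - p

/-- The probability measure `μ` on `m × n` binary matrices with i.i.d. Bernoulli(p)
entries, evaluated on an event `E`. -/
noncomputable def matProb (m n : ℕ) (p : ℝ) (E : Set (Matrix (Fin m) (Fin n) (ZMod 2))) : ℝ :=
  ∑ X : Matrix (Fin m) (Fin n) (ZMod 2), E.indicator (matWeight m n p) X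

/-- `R_j`, the set of left neighbours of the right vertex `b_j`. -/
def rightNbrs {m n : ℕ} (X : Matrix (Fin m) (Fin n) (ZMod 2)) (j : Fin m) : Finset (Fin n) :=
  Finset.univ.filter fun i => X j i = 1

/-!
A left vertex `a_i` has no private neighbour with respect to `S` exactly when none of the `m`
independent rows of `X` has a `1` in column `i` and `0`s in the other columns of `S`; one row does
so with probability `p (1 - p)^(#S - 1)`, so the event has probability
`(1 - p (1 - p)^(#S - 1))^m ≤ e^{-m p (1 - p)^(#S - 1)}`. A union bound over the
`C(n, g)` sets `S` of size `g ≤ t` and the `g` choices of `a_i ∈ S` gives the first inequality.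
For `g ≤ t ≤ n/2` each of the three factors of the `g`-th summand is increasing in `g`, which
gives the second.
-/

open Finset

lemma sum_indicator_forall_mem_prod {ι β R : Type*} [Fintype ι] [DecidableEq ι] [Fintype β]
    [CommSemiring R] (w : ι → β → R) (C : ι → Set β) :
    ∑ x : ι → β, {x : ι → β | ∀ i, x i ∈ C i}.indicator (fun x => ∏ i, w i (x i)) x
      = ∏ i, ∑ b, (C i).indicator (w i) b := by
  classical
  rw [Fintype.prod_sum]
  refine sum_congr rfl fun x _ => ?_
  simp only [Set.indicator_apply, Set.mem_ofPred_eq, prod_ite_zero, mem_univ, true_implies]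

noncomputable def bitWeight (p : ℝ) (b : ZMod 2) : ℝ := if b = 1 then p else 1 - p

noncomputable def rowWeight (n : ℕ) (p : ℝ) (r : Fin n → ZMod 2) : ℝ :=
  ∏ i, bitWeight p (r i)

noncomputable def rowProb (n : ℕ) (p : ℝ) (C : Set (Fin n → ZMod 2)) : ℝ :=
  ∑ r, C.indicator (rowWeight n p) r

lemma sum_bitWeight (p : ℝ) : ∑ b, bitWeight p b = 1 := by
  rw [show (univ : Finset (ZMod 2)) = {0, 1} from rfl, sum_pair (by decide)]
  simp [bitWeight]

lemma rowProb_cylinder (n : ℕ) (p : ℝ) (T : Finset (Fin n)) (v : Fin n → ZMod 2) :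
    rowProb n p {r | ∀ i ∈ T, r i = v i} = ∏ i ∈ T, bitWeight p (v i) := by
  have hcyl : {r : Fin n → ZMod 2 | ∀ i ∈ T, r i = v i}
      = {r | ∀ i, r i ∈ if i ∈ T then {v i} else Set.univ} := by
    ext r
    exact forall_congr' fun i => by split_ifs <;> simp_all
  have hcoord : ∀ i, ∑ b, (if i ∈ T then {v i} else Set.univ).indicator (bitWeight p) b
      = if i ∈ T then bitWeight p (v i) else 1 := by
    intro i
    split_ifs
    · simp [Set.indicator_apply]
    · simp [sum_bitWeight]
  unfold rowProb rowWeight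
  rw [hcyl, sum_indicator_forall_mem_prod, prod_congr rfl fun i _ => hcoord i, prod_ite_mem,
    univ_inter]

lemma rowProb_univ (n : ℕ) (p : ℝ) : rowProb n p Set.univ = 1 := by
  simpa using rowProb_cylinder n p ∅ 0

lemma rowProb_compl (n : ℕ) (p : ℝ) (C : Set (Fin n → ZMod 2)) :
    rowProb n p Cᶜ = 1 - rowProb n p C := by
  rw [← rowProb_univ n p]
  simp only [rowProb, Set.indicator_compl, Set.indicator_univ, Pi.sub_apply, sum_sub_distrib]

/-- `b_j ∈ M_i(S)` iff row `j` of `X` lies in `privateRows S i`. -/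
def privateRows {n : ℕ} (S : Finset (Fin n)) (i : Fin n) : Set (Fin n → ZMod 2) :=
  {r | r i = 1 ∧ ∀ i' ∈ S, i' ≠ i → r i' = 0}

lemma privateRows_eq_cylinder {n : ℕ} {S : Finset (Fin n)} {i : Fin n} (hi : i ∈ S) :
    privateRows S i = {r | ∀ i' ∈ S, r i' = (Pi.single i 1 : Fin n → ZMod 2) i'} := by
  ext r
  simp only [privateRows, Set.mem_ofPred_eq, Pi.single_apply]
  constructor
  · rintro ⟨hri, hrS⟩ i' hi'
    split_ifs with h
    · exact h ▸ hri
    · exact hrS i' hi' h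
  · intro h
    exact ⟨by simpa using h i hi, fun i' hi' hne => by simpa [hne] using h i' hi'⟩

lemma rowProb_privateRows (n : ℕ) (p : ℝ) {S : Finset (Fin n)} {i : Fin n} (hi : i ∈ S) :
    rowProb n p (privateRows S i) = p * (1 - p) ^ (#S - 1) := by
  rw [privateRows_eq_cylinder hi, rowProb_cylinder, ← mul_prod_erase S _ hi, Pi.single_eq_same,
    ← card_erase_of_mem hi, ← prod_const]
  refine congrArg₂ (· * ·) (by simp [bitWeight]) (prod_congr rfl fun i' hi' => ?_)
  simp [bitWeight, Pi.single_eq_of_ne (ne_of_mem_erase hi')]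

lemma matProb_forall_rows (m n : ℕ) (p : ℝ) (C : Set (Fin n → ZMod 2)) :
    matProb m n p {X | ∀ j, X j ∈ C} = rowProb n p C ^ m := by
  rw [rowProb, ← Fin.prod_const]
  exact sum_indicator_forall_mem_prod (fun (_ : Fin m) => rowWeight n p) (fun _ => C)

lemma matProb_forall_notMem_privateRows (m n : ℕ) (p : ℝ) {S : Finset (Fin n)} {i : Fin n}
    (hi : i ∈ S) :
    matProb m n p {X | ∀ j, X j ∉ privateRows S i} = (1 - p * (1 - p) ^ (#S - 1)) ^ m := by
  rw [← rowProb_privateRows n p hi, ← rowProb_compl]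
  exact matProb_forall_rows m n p (privateRows S i)ᶜ

lemma matWeight_nonneg {m n : ℕ} {p : ℝ} (hp0 : 0 ≤ p) (hp1 : p ≤ 1)
    (X : Matrix (Fin m) (Fin n) (ZMod 2)) : 0 ≤ matWeight m n p X :=
  prod_nonneg fun _ _ => prod_nonneg fun _ _ => by split <;> linarith

lemma matProb_le_sum_of_subset_biUnion {m n : ℕ} {p : ℝ} (hp0 : 0 ≤ p) (hp1 : p ≤ 1)
    {κ : Type*} {E : Set (Matrix (Fin m) (Fin n) (ZMod 2))} {s : Finset κ}
    {A : κ → Set (Matrix (Fin m) (Fin n) (ZMod 2))} (hE : E ⊆ ⋃ k ∈ s, A k) :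
    matProb m n p E ≤ ∑ k ∈ s, matProb m n p (A k) := by
  have hnonneg : ∀ (B : Set (Matrix (Fin m) (Fin n) (ZMod 2))) X,
      0 ≤ B.indicator (matWeight m n p) X := fun B =>
    Set.indicator_nonneg fun X _ => matWeight_nonneg hp0 hp1 X
  unfold matProb
  rw [sum_comm]
  refine sum_le_sum fun X _ => ?_
  by_cases hX : X ∈ E
  · obtain ⟨k, hk, hXk⟩ := Set.mem_iUnion₂.mp (hE hX)
    rw [Set.indicator_of_mem hX, ← Set.indicator_of_mem hXk (matWeight m n p)]
    exact single_le_sum (fun k _ => hnonneg (A k) X) hk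
  · rw [Set.indicator_of_notMem hX]
    exact sum_nonneg fun k _ => hnonneg (A k) X

lemma one_sub_pow_le_exp_neg_mul {q : ℝ} (hq : q ≤ 1) (m : ℕ) :
    (1 - q) ^ m ≤ Real.exp (-(m * q)) := by
  rw [← mul_neg, Real.exp_nat_mul]
  exact pow_le_pow_left₀ (by linarith) (Real.one_sub_le_exp_neg q) m

lemma choose_le_choose_left_of_le_half {n g t : ℕ} (hgt : g ≤ t) (ht : t ≤ n / 2) :
    n.choose g ≤ n.choose t := by
  induction t, hgt using Nat.le_induction with
  | base => exact le_rfl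
  | succ k _ ih => exact (ih (by omega)).trans (Nat.choose_le_succ_of_lt_half_left (by omega))

lemma matProb_forall_notMem_privateRows_le_exp (m n : ℕ) {p : ℝ} (hp0 : 0 ≤ p) (hp1 : p ≤ 1)
    {S : Finset (Fin n)} {i : Fin n} (hi : i ∈ S) :
    matProb m n p {X | ∀ j, X j ∉ privateRows S i}
      ≤ Real.exp (-(m : ℝ) * p * (1 - p) ^ (#S - 1)) := by
  rw [matProb_forall_notMem_privateRows m n p hi]
  have hq : p * (1 - p) ^ (#S - 1) ≤ 1 :=
    mul_le_one₀ hp1 (pow_nonneg (by linarith) _) (pow_le_one₀ (by linarith) (by linarith))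
  exact (one_sub_pow_le_exp_neg_mul hq m).trans_eq (by ring_nf)

lemma compl_forall_exists_privateRows_subset (m n t : ℕ) :
    {X : Matrix (Fin m) (Fin n) (ZMod 2) |
        ∀ S : Finset (Fin n), S.Nonempty → #S ≤ t →
          ∀ i ∈ S, ∃ j, X j ∈ privateRows S i}ᶜ
      ⊆ ⋃ g ∈ Icc 1 t, ⋃ S ∈ powersetCard g univ, ⋃ i ∈ S,
          {X | ∀ j, X j ∉ privateRows S i} := by
  intro X hX
  simp only [Set.mem_compl_iff, Set.mem_ofPred_eq, not_forall, not_exists] at hX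
  obtain ⟨S, hS, hSt, i, hi, hX⟩ := hX
  simp only [Set.mem_iUnion]
  exact ⟨#S, mem_Icc.2 ⟨hS.card_pos, hSt⟩, S, mem_powersetCard_univ.2 rfl, i, hi, hX⟩

lemma matProb_compl_forall_exists_privateRows_le (m n t : ℕ) {p : ℝ} (hp0 : 0 ≤ p)
    (hp1 : p ≤ 1) :
    matProb m n p
        {X | ∀ S : Finset (Fin n), S.Nonempty → #S ≤ t →
          ∀ i ∈ S, ∃ j, X j ∈ privateRows S i}ᶜ
      ≤ ∑ g ∈ Icc 1 t,
          (g : ℝ) * (n.choose g : ℝ) * Real.exp (-(m : ℝ) * p * (1 - p) ^ (g - 1)) := by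
  calc _ ≤ ∑ g ∈ Icc 1 t, ∑ S ∈ powersetCard g univ, ∑ i ∈ S,
          matProb m n p {X | ∀ j, X j ∉ privateRows S i} := by
        refine (matProb_le_sum_of_subset_biUnion hp0 hp1
          (compl_forall_exists_privateRows_subset m n t)).trans (sum_le_sum fun g _ => ?_)
        exact (matProb_le_sum_of_subset_biUnion hp0 hp1 subset_rfl).trans
          (sum_le_sum fun S _ => matProb_le_sum_of_subset_biUnion hp0 hp1 subset_rfl)
    _ ≤ ∑ g ∈ Icc 1 t, ∑ S ∈ powersetCard g (univ : Finset (Fin n)), ∑ i ∈ S,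
          Real.exp (-(m : ℝ) * p * (1 - p) ^ (g - 1)) := by
        gcongr with g _ S hS i hi
        rw [← mem_powersetCard_univ.1 hS]
        exact matProb_forall_notMem_privateRows_le_exp m n hp0 hp1 hi
    _ = _ := by
        refine sum_congr rfl fun g _ => ?_
        rw [sum_congr rfl fun S hS => by rw [sum_const, mem_powersetCard_univ.1 hS], sum_const,
          card_powersetCard, card_univ, Fintype.card_fin, nsmul_eq_mul, nsmul_eq_mul]
        ring

lemma sum_Icc_mul_choose_mul_exp_le (m n t : ℕ) {p : ℝ} (hp0 : 0 ≤ p) (hp1 : p ≤ 1)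
    (ht : t ≤ n / 2) :
    ∑ g ∈ Icc 1 t,
        (g : ℝ) * (n.choose g : ℝ) * Real.exp (-(m : ℝ) * p * (1 - p) ^ (g - 1))
      ≤ (t : ℝ) ^ 2 * (n.choose t : ℝ) * Real.exp (-(m : ℝ) * p * (1 - p) ^ (t - 1)) := by
  have hterm : ∀ g ∈ Icc 1 t,
      (g : ℝ) * (n.choose g : ℝ) * Real.exp (-(m : ℝ) * p * (1 - p) ^ (g - 1))
        ≤ (t : ℝ) * (n.choose t : ℝ) * Real.exp (-(m : ℝ) * p * (1 - p) ^ (t - 1)) := by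
    intro g hg
    have hgt := (mem_Icc.1 hg).2
    have hpow : (1 - p) ^ (t - 1) ≤ (1 - p) ^ (g - 1) :=
      pow_le_pow_of_le_one (by linarith) (by linarith) (by omega)
    have hmp : -(m : ℝ) * p ≤ 0 := mul_nonpos_of_nonpos_of_nonneg (by simp) hp0
    gcongr ?_ * ?_ * Real.exp ?_
    · exact_mod_cast hgt
    · exact_mod_cast choose_le_choose_left_of_le_half hgt ht
    · exact mul_le_mul_of_nonpos_left hpow hmp
  calc _ ≤ ∑ _g ∈ Icc 1 t,
          (t : ℝ) * (n.choose t : ℝ) * Real.exp (-(m : ℝ) * p * (1 - p) ^ (t - 1)) :=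
        sum_le_sum hterm
    _ = _ := by
        rw [sum_const, Nat.card_Icc, add_tsub_cancel_right, nsmul_eq_mul]
        ring

theorem E_low_complement_prob_general (m n t : ℕ)
    (p : ℝ) (hp0 : 0 < p) (hp1 : p < 1 / 2) (ht2 : 2 * t < n) :
    matProb m n p
        {X | ∀ S : Finset (Fin n), S.Nonempty → S.card ≤ t → ∀ i ∈ S,
          ∃ j : Fin m, X j i = 1 ∧ ∀ i' ∈ S, i' ≠ i → X j i' = 0}ᶜ
      ≤ ∑ g ∈ Finset.Icc 1 t,
          (g : ℝ) * (n.choose g : ℝ) * Real.exp (-(m : ℝ) * p * (1 - p) ^ (g - 1)) ∧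
    ∑ g ∈ Finset.Icc 1 t,
        (g : ℝ) * (n.choose g : ℝ) * Real.exp (-(m : ℝ) * p * (1 - p) ^ (g - 1))
      ≤ (t : ℝ) ^ 2 * (n.choose t : ℝ) * Real.exp (-(m : ℝ) * p * (1 - p) ^ (t - 1)) := by
  have hp1' : p ≤ 1 := by linarith
  exact ⟨matProb_compl_forall_exists_privateRows_le m n t hp0.le hp1',
    sum_Icc_mul_choose_mul_exp_le m n t hp0.le hp1' (by omega)⟩

/-- Let `E_low` be the event that for every nonempty set `S` of at most `t` left vertices
and every `a_i ∈ S`, some right vertex is adjacent to `a_i` but to no other vertex of `S`.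
Then `μ(E_low^c) ≤ Σ_{g=1}^t g C(n,g) e^{-mp(1-p)^{g-1}} ≤ t² C(n,t) e^{-mp(1-p)^{t-1}}`. -/
theorem E_low_complement_prob (m n t : ℕ) (hm : 0 < m) (hn : 0 < n)
    (p : ℝ) (hp0 : 0 < p) (hp1 : p < 1 / 2) (ht1 : 1 ≤ t) (ht2 : 2 * t < n) :
    matProb m n p
        {X | ∀ S : Finset (Fin n), S.Nonempty → S.card ≤ t → ∀ i ∈ S,
          ∃ j : Fin m, X j i = 1 ∧ ∀ i' ∈ S, i' ≠ i → X j i' = 0}ᶜ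
      ≤ ∑ g ∈ Finset.Icc 1 t,
          (g : ℝ) * (n.choose g : ℝ) * Real.exp (-(m : ℝ) * p * (1 - p) ^ (g - 1)) ∧
    ∑ g ∈ Finset.Icc 1 t,
        (g : ℝ) * (n.choose g : ℝ) * Real.exp (-(m : ℝ) * p * (1 - p) ^ (g - 1))
      ≤ (t : ℝ) ^ 2 * (n.choose t : ℝ) * Real.exp (-(m : ℝ) * p * (1 - p) ^ (t - 1)) :=
  E_low_complement_prob_general m n t p hp0 hp1 ht2
end

section
/- Let G be a connected simple graph on n ≥ 3 vertices with maximum degree Δ. If 0 < γ < Δ/(Δ+1), then Θ_γ(G) ≥ n / (2^{H(γ)}·Δ^γ); and if Δ/(Δ+1) ≤ γ ≤ 1, then Θ_γ(G) ≥ n/(Δ+1). -/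
/-!
A maximum independent set of a finite graph is dominating, so its size is at least the number of
vertices divided by the largest closed-neighbourhood size. In `G(r,k)` a closed neighbour of a
tuple differs from it in a set of at most `k` coordinates, where it takes values adjacent in `G`;
so `α(G(r,k)) ≥ n^r / ∑_{j ≤ k} C(r,j) Δ^j`. For `k = ⌊γ r⌋` this sum is at most `(Δ + 1)^r`,
and, by the Chernoff-type estimate `∑_{j ≤ k} C(r,j) Δ^j ≤ t^k (1 + Δ/t)^r` optimised at
`t = (1 - γ) Δ / γ ≥ 1`, at most `(2^{H(γ)} Δ^γ)^r` when `γ ≤ Δ/(Δ+1)`. A single `r ≥ 1/γ`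
then bounds `Θ_γ(G)` from below.
-/

/-- The binary entropy function `H(x) = -x log₂ x - (1-x) log₂ (1-x)`. -/
noncomputable def binH (x : ℝ) : ℝ := -x * Real.logb 2 x - (1 - x) * Real.logb 2 (1 - x)

/-- The graph `G(r,k)`: vertices are `r`-tuples of vertices of `G`, and two distinct
tuples are adjacent iff they are adjacent in the `r`-th strong power of `G` (in every
coordinate they are equal or adjacent) and they differ in at most `k` coordinates.
For `k = r` this is exactly the `r`-th strong power `G(r)`. -/
def strongPow {V : Type*} [DecidableEq V] (G : SimpleGraph V) (r k : ℕ) :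
    SimpleGraph (Fin r → V) where
  Adj u v := u ≠ v ∧ (∀ i, u i = v i ∨ G.Adj (u i) (v i)) ∧
    (Finset.univ.filter fun i => u i ≠ v i).card ≤ k
  symm := ⟨by
    rintro u v ⟨h1, h2, h3⟩
    refine ⟨fun h => h1 h.symm, fun i => (h2 i).imp Eq.symm (fun h => h.symm), ?_⟩
    have he : (Finset.univ.filter fun i => v i ≠ u i)
        = (Finset.univ.filter fun i => u i ≠ v i) := by
      ext i; simp [ne_comm]
    rw [he]; exact h3⟩
  loopless := ⟨fun u h => h.1 rfl⟩

/-- The independence number `α(H)` of a graph `H` on a finite vertex set: the maximum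
size of a stable (independent) set of vertices. -/
noncomputable def indepNum {α : Type*} [Fintype α] (H : SimpleGraph α) : ℕ :=
  sSup {k | ∃ s : Finset α, (s : Set α).Pairwise (fun a b => ¬H.Adj a b) ∧ s.card = k}

/-- The `γ`-fractional capacity `Θ_γ(G) = sup_{r ≥ 1/γ} α(G(r, ⌊γr⌋))^{1/r}`.
For `γ = 1` this is the (full) Shannon capacity `Θ(G)`. -/
noncomputable def fracCap {V : Type*} [Fintype V] [DecidableEq V]
    (γ : ℝ) (G : SimpleGraph V) : ℝ :=
  sSup {x : ℝ | ∃ r : ℕ, 1 ≤ γ * r ∧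
    x = (indepNum (strongPow G r ⌊γ * r⌋₊) : ℝ) ^ ((r : ℝ)⁻¹)}

open Finset

namespace SimpleGraph

variable {α : Type*} [Fintype α] (H : SimpleGraph α) [DecidableRel H.Adj]

/-- Every vertex lies in the closed neighbourhood of some vertex of a maximum independent set,
since otherwise that set could be enlarged. -/
theorem card_le_mul_indepNum_of_degree_lt {M : ℕ} (hM : ∀ v, H.degree v < M) :
    Fintype.card α ≤ M * H.indepNum := by
  classical
  obtain ⟨s, hs⟩ := H.maximumIndepSet_exists
  have hcover : (univ : Finset α) ⊆ s.biUnion fun v => insert v (H.neighborFinset v) := by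
    intro w _
    by_contra hw
    simp only [mem_biUnion, mem_insert, mem_neighborFinset, not_exists, not_and, not_or] at hw
    have hindep : H.IsIndepSet (insert w s : Finset α) := by
      rw [coe_insert]
      exact hs.isIndepSet.insert fun v hv _ => ⟨fun h => (hw v hv).2 h.symm, (hw v hv).2⟩
    have := hs.maximum _ hindep
    rw [card_insert_of_notMem fun hws => (hw w hws).1 rfl] at this
    omega
  calc Fintype.card α = #(univ : Finset α) := card_univ.symm
    _ ≤ #s * M := (card_le_card hcover).trans <|
        card_biUnion_le_card_mul _ _ _ fun v _ => (card_insert_le _ _).trans (hM v)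
    _ = M * H.indepNum := by
        rw [maximumIndepSet_card_eq_indepNum s hs, mul_comm]

end SimpleGraph

theorem indepNum_eq_indepNum {α : Type*} [Fintype α] (H : SimpleGraph α) :
    indepNum H = H.indepNum := by
  simp only [indepNum, SimpleGraph.indepNum, SimpleGraph.isNIndepSet_iff, SimpleGraph.IsIndepSet]

instance {V : Type*} [DecidableEq V] (G : SimpleGraph V) [DecidableRel G.Adj] (r k : ℕ) :
    DecidableRel (strongPow G r k).Adj :=
  fun u v => inferInstanceAs (Decidable (u ≠ v ∧ _ ∧ _))

section StrongPow

variable {V : Type*} [Fintype V] (G : SimpleGraph V) [DecidableRel G.Adj] {r : ℕ}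

theorem card_piFinset_ite_neighborFinset_le (u : Fin r → V) (S : Finset (Fin r)) :
    #(Fintype.piFinset fun i => if i ∈ S then G.neighborFinset (u i) else {u i}) ≤
      G.maxDegree ^ #S := by
  rw [Fintype.card_piFinset]
  calc ∏ i, #(if i ∈ S then G.neighborFinset (u i) else {u i})
      = ∏ i, if i ∈ S then G.degree (u i) else 1 :=
        prod_congr rfl fun i _ => by split_ifs <;> simp
    _ = ∏ i ∈ S, G.degree (u i) := by rw [prod_ite_mem, univ_inter]
    _ ≤ G.maxDegree ^ #S := prod_le_pow_card _ _ _ fun i _ => G.degree_le_maxDegree (u i)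

variable [DecidableEq V]

/-- A closed neighbour of `u` in `G(r,k)` is determined by the set `S` of at most `k`
coordinates where it differs from `u` and by a choice of a `G`-neighbour of `u i` for `i ∈ S`. -/
theorem degree_strongPow_lt (k : ℕ) (u : Fin r → V) :
    (strongPow G r k).degree u < ∑ j ∈ range (k + 1), r.choose j * G.maxDegree ^ j := by
  have hsub : insert u ((strongPow G r k).neighborFinset u) ⊆
      (range (k + 1)).biUnion fun j => (powersetCard j univ).biUnion fun S =>
        Fintype.piFinset fun i => if i ∈ S then G.neighborFinset (u i) else {u i} := by
    intro v hv
    have hclose : (∀ i, u i = v i ∨ G.Adj (u i) (v i)) ∧ #{i | u i ≠ v i} ≤ k := by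
      rcases mem_insert.1 hv with rfl | hv
      · simp
      · exact ((strongPow G r k).mem_neighborFinset u v).1 hv |>.2
    simp only [mem_biUnion, mem_range, mem_powersetCard, Fintype.mem_piFinset]
    refine ⟨_, Nat.lt_succ_of_le hclose.2, _, ⟨subset_univ _, rfl⟩, fun i => ?_⟩
    split_ifs with hi
    · exact (G.mem_neighborFinset _ _).2 <|
        (hclose.1 i).resolve_left (mem_filter.1 hi).2
    · simpa [eq_comm] using hi
  calc (strongPow G r k).degree u + 1
      = #(insert u ((strongPow G r k).neighborFinset u)) := by
        rw [card_insert_of_notMem (by simp), SimpleGraph.card_neighborFinset_eq_degree]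
    _ ≤ ∑ j ∈ range (k + 1), #(powersetCard j (univ : Finset (Fin r))) * G.maxDegree ^ j :=
        (card_le_card hsub).trans <| card_biUnion_le.trans <| sum_le_sum fun j _ =>
          card_biUnion_le_card_mul _ _ _ fun S hS =>
            (mem_powersetCard.1 hS).2 ▸ card_piFinset_ite_neighborFinset_le G u S
    _ = ∑ j ∈ range (k + 1), r.choose j * G.maxDegree ^ j := by
        simp only [card_powersetCard, card_univ, Fintype.card_fin]

theorem card_pow_le_mul_indepNum_strongPow (k : ℕ) :
    Fintype.card V ^ r ≤
      (∑ j ∈ range (k + 1), r.choose j * G.maxDegree ^ j) * indepNum (strongPow G r k) := by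
  calc Fintype.card V ^ r = Fintype.card (Fin r → V) := by simp
    _ ≤ _ := by
        rw [indepNum_eq_indepNum]
        exact (strongPow G r k).card_le_mul_indepNum_of_degree_lt (degree_strongPow_lt G k)

end StrongPow

theorem sum_range_choose_mul_pow_le_add_one_pow {y : ℝ} (hy : 0 ≤ y) (r k : ℕ) :
    ∑ j ∈ range (k + 1), (r.choose j : ℝ) * y ^ j ≤ (y + 1) ^ r := by
  calc ∑ j ∈ range (k + 1), (r.choose j : ℝ) * y ^ j
      ≤ ∑ j ∈ range (k + 1) ∪ range (r + 1), (r.choose j : ℝ) * y ^ j :=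
        sum_le_sum_of_subset_of_nonneg subset_union_left fun _ _ _ => by positivity
    _ = ∑ j ∈ range (r + 1), (r.choose j : ℝ) * y ^ j := by
        refine (sum_subset subset_union_right fun j _ hj => ?_).symm
        rw [Nat.choose_eq_zero_of_lt (by simpa using hj), Nat.cast_zero, zero_mul]
    _ = (y + 1) ^ r := by
        rw [add_pow]
        exact sum_congr rfl fun j _ => by ring

/-- Weight the `j`-th term by `t ^ (k - j) ≥ 1` and complete the binomial sum. -/
theorem sum_range_choose_mul_pow_le_pow_mul {x t : ℝ} (hx : 0 ≤ x) (ht : 1 ≤ t) (r k : ℕ) :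
    ∑ j ∈ range (k + 1), (r.choose j : ℝ) * x ^ j ≤ t ^ k * (x / t + 1) ^ r := by
  have ht0 : 0 < t := zero_lt_one.trans_le ht
  calc ∑ j ∈ range (k + 1), (r.choose j : ℝ) * x ^ j
      = ∑ j ∈ range (k + 1), t ^ j * ((r.choose j : ℝ) * (x / t) ^ j) :=
        sum_congr rfl fun j _ => by rw [div_pow, mul_left_comm, mul_div_cancel₀ _ (by positivity)]
    _ ≤ ∑ j ∈ range (k + 1), t ^ k * ((r.choose j : ℝ) * (x / t) ^ j) :=
        sum_le_sum fun j hj => by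
          gcongr
          exact Nat.lt_succ_iff.1 (mem_range.1 hj)
    _ ≤ t ^ k * (x / t + 1) ^ r := by
        rw [← mul_sum]
        gcongr
        exact sum_range_choose_mul_pow_le_add_one_pow (by positivity) r k

theorem two_rpow_binH {γ : ℝ} (h0 : 0 < γ) (h1 : γ < 1) :
    (2 : ℝ) ^ binH γ = γ ^ (-γ) * (1 - γ) ^ (-(1 - γ)) := by
  have h2 : ∀ {y : ℝ}, 0 < y → (2 : ℝ) ^ (-(y * Real.logb 2 y)) = y ^ (-y) := fun {y} hy => by
    rw [show -(y * Real.logb 2 y) = Real.logb 2 y * -y by ring, Real.rpow_mul zero_le_two,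
      Real.rpow_logb zero_lt_two (by norm_num) hy]
  rw [binH, neg_mul, ← neg_add', neg_add, Real.rpow_add zero_lt_two, h2 h0, h2 (sub_pos.2 h1)]

/-- `t = (1 - γ) x / γ` is the optimal choice in the previous bound; at it
`t ^ γ (x / t + 1) = 2 ^ H(γ) x ^ γ`. -/
theorem sum_range_choose_mul_pow_le_two_rpow_binH {x γ : ℝ} (hx : 0 ≤ x) (hγ0 : 0 < γ)
    (hγx : γ ≤ x / (x + 1)) {r k : ℕ} (hk : (k : ℝ) ≤ γ * r) :
    ∑ j ∈ range (k + 1), (r.choose j : ℝ) * x ^ j ≤ ((2 : ℝ) ^ binH γ * x ^ γ) ^ r := by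
  have hγx' : γ ≤ (1 - γ) * x := by
    rw [le_div_iff₀ (by positivity)] at hγx
    linarith
  have hγ1 : γ < 1 :=
    hγx.trans_lt ((div_lt_one (by positivity)).2 (by linarith))
  have hq : 0 < 1 - γ := sub_pos.2 hγ1
  have hx0 : 0 < x := pos_of_mul_pos_right (hγ0.trans_le hγx') hq.le
  set t := (1 - γ) * x / γ
  have ht : 1 ≤ t := (one_le_div hγ0).2 hγx'
  have hbase : t ^ γ * (x / t + 1) = (2 : ℝ) ^ binH γ * x ^ γ := by
    have hxt : x / t + 1 = (1 - γ)⁻¹ := by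
      simp only [t]
      field_simp
      ring
    rw [hxt, two_rpow_binH hγ0 hγ1, Real.div_rpow (by positivity) hγ0.le,
      Real.mul_rpow hq.le hx, Real.rpow_neg hγ0.le, neg_sub, Real.rpow_sub hq, Real.rpow_one]
    ring
  calc ∑ j ∈ range (k + 1), (r.choose j : ℝ) * x ^ j
      ≤ t ^ k * (x / t + 1) ^ r := sum_range_choose_mul_pow_le_pow_mul hx ht r k
    _ ≤ t ^ (γ * r) * (x / t + 1) ^ r := by
        rw [← Real.rpow_natCast t k]
        gcongr
    _ = ((2 : ℝ) ^ binH γ * x ^ γ) ^ r := by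
        rw [Real.rpow_mul (by positivity), Real.rpow_natCast, ← mul_pow, hbase]

section FracCap

variable {V : Type*} [Fintype V] [DecidableEq V] (G : SimpleGraph V)

theorem rpow_inv_indepNum_le_fracCap {γ : ℝ} {r : ℕ} (hr : 1 ≤ γ * r) :
    (indepNum (strongPow G r ⌊γ * r⌋₊) : ℝ) ^ ((r : ℝ)⁻¹) ≤ fracCap γ G := by
  refine le_csSup ⟨Fintype.card V, ?_⟩ ⟨r, hr, rfl⟩
  rintro _ ⟨m, hm, rfl⟩
  have hm0 : m ≠ 0 := by rintro rfl; norm_num at hm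
  have hα : (indepNum (strongPow G m ⌊γ * m⌋₊) : ℝ) ≤ (Fintype.card V : ℝ) ^ m := by
    obtain ⟨s, hs⟩ := (strongPow G m ⌊γ * m⌋₊).exists_isNIndepSet_indepNum
    rw [indepNum_eq_indepNum, ← hs.card_eq]
    exact_mod_cast (card_le_univ s).trans_eq (by simp)
  calc (indepNum (strongPow G m ⌊γ * m⌋₊) : ℝ) ^ ((m : ℝ)⁻¹)
      ≤ ((Fintype.card V : ℝ) ^ m) ^ ((m : ℝ)⁻¹) := by gcongr
    _ = Fintype.card V := Real.pow_rpow_inv_natCast (Nat.cast_nonneg _) hm0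

theorem div_le_fracCap [DecidableRel G.Adj] {γ C : ℝ} (hγ : 0 < γ) (hC : 0 < C)
    (h : ∀ r : ℕ,
      ∑ j ∈ range (⌊γ * r⌋₊ + 1), (r.choose j : ℝ) * (G.maxDegree : ℝ) ^ j ≤ C ^ r) :
    (Fintype.card V : ℝ) / C ≤ fracCap γ G := by
  set r := ⌈γ⁻¹⌉₊
  have hr : 1 ≤ γ * r := by
    calc 1 = γ * γ⁻¹ := (mul_inv_cancel₀ hγ.ne').symm
      _ ≤ γ * r := by gcongr; exact Nat.le_ceil _
  have hr0 : r ≠ 0 := by rintro h; rw [h, Nat.cast_zero, mul_zero] at hr; norm_num at hr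
  have hpow : ((Fintype.card V : ℝ) / C) ^ r ≤ indepNum (strongPow G r ⌊γ * r⌋₊) := by
    rw [div_pow, div_le_iff₀ (pow_pos hC r)]
    calc (Fintype.card V : ℝ) ^ r
        ≤ (∑ j ∈ range (⌊γ * r⌋₊ + 1), (r.choose j : ℝ) * (G.maxDegree : ℝ) ^ j) *
            indepNum (strongPow G r ⌊γ * r⌋₊) := by
          exact_mod_cast card_pow_le_mul_indepNum_strongPow G ⌊γ * r⌋₊
      _ ≤ C ^ r * indepNum (strongPow G r ⌊γ * r⌋₊) := by gcongr; exact h r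
      _ = _ := mul_comm _ _
  calc (Fintype.card V : ℝ) / C = (((Fintype.card V : ℝ) / C) ^ r) ^ ((r : ℝ)⁻¹) :=
        (Real.pow_rpow_inv_natCast (by positivity) hr0).symm
    _ ≤ (indepNum (strongPow G r ⌊γ * r⌋₊) : ℝ) ^ ((r : ℝ)⁻¹) := by gcongr
    _ ≤ fracCap γ G := rpow_inv_indepNum_le_fracCap G hr

end FracCap

theorem fracCap_lower_bound_maxDegree_general {V : Type*} [Fintype V] [DecidableEq V]
    (G : SimpleGraph V) [DecidableRel G.Adj]
    (γ : ℝ) (hγ0 : 0 < γ) :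
    (γ < (G.maxDegree : ℝ) / ((G.maxDegree : ℝ) + 1) →
      (Fintype.card V : ℝ) / ((2 : ℝ) ^ binH γ * (G.maxDegree : ℝ) ^ γ) ≤ fracCap γ G) ∧
    ((G.maxDegree : ℝ) / ((G.maxDegree : ℝ) + 1) ≤ γ →
      (Fintype.card V : ℝ) / ((G.maxDegree : ℝ) + 1) ≤ fracCap γ G) := by
  refine ⟨fun hγΔ => ?_, fun _ => div_le_fracCap G hγ0 (by positivity) fun r =>
    sum_range_choose_mul_pow_le_add_one_pow (Nat.cast_nonneg _) r _⟩
  have hΔ : (0 : ℝ) < G.maxDegree := by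
    by_contra! h
    rw [le_antisymm h (Nat.cast_nonneg _), zero_div] at hγΔ
    exact hγΔ.not_gt hγ0
  exact div_le_fracCap G hγ0 (by positivity) fun r =>
    sum_range_choose_mul_pow_le_two_rpow_binH hΔ.le hγ0 hγΔ.le (Nat.floor_le (by positivity))

/-- Lower bound via the maximum degree `Δ`: if `0 < γ < Δ/(Δ+1)` then
`Θ_γ(G) ≥ n / (2^{H(γ)} Δ^γ)`, and if `Δ/(Δ+1) ≤ γ ≤ 1` then `Θ_γ(G) ≥ n/(Δ+1)`. -/
theorem fracCap_lower_bound_maxDegree {V : Type*} [Fintype V] [DecidableEq V]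
    (G : SimpleGraph V) [DecidableRel G.Adj]
    (hconn : G.Connected) (hn : 3 ≤ Fintype.card V)
    (γ : ℝ) (hγ0 : 0 < γ) (hγ1 : γ ≤ 1) :
    (γ < (G.maxDegree : ℝ) / ((G.maxDegree : ℝ) + 1) →
      (Fintype.card V : ℝ) / ((2 : ℝ) ^ binH γ * (G.maxDegree : ℝ) ^ γ) ≤ fracCap γ G) ∧
    ((G.maxDegree : ℝ) / ((G.maxDegree : ℝ) + 1) ≤ γ →
      (Fintype.card V : ℝ) / ((G.maxDegree : ℝ) + 1) ≤ fracCap γ G) :=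
  fracCap_lower_bound_maxDegree_general G γ hγ0
end
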